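/- Let K ∈ L²(0,T) with ∫₀ᵀ K(t)² dt =: κ² < ∞, let Q : ℂ → ℂ satisfy a local Lipschitz bound |Q(z₁) − Q(z₂)| ≤ C(1 + |z₁| + |z₂|)|z₁ − z₂|, and fix v ∈ ℂ. Then any two continuous solutions ψ₁, ψ₂ : [0,T₀] → ℂ of the Riccati–Volterra equation ψ = vK + K*(Q∘ψ) on a common interval [0,T₀] ⊆ [0,T] with K continuous on (0,T] coincide: ψ₁ = ψ₂ on [0,T₀]. -/

import Mathlib

open MeasureTheory Real Set

/-!
On `[0, T₀]` both solutions are bounded, so the growth condition on `Q` becomes a plain Lipschitz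
bound with some constant `L`, and `u = ‖ψ₁ - ψ₂‖` satisfies `u ≤ (L|K|) * u`. As `K ∈ L² ⊆ L¹` on
a bounded interval, there is `h > 0` with `L ∫₀ʰ |K| ≤ 1/2`. If `u` vanishes on `[0, a]`, then on
`[0, a + h]` the maximum of `u` is at most half of itself, so `u` vanishes on `[0, a + h]`;
finitely many such steps cover `[0, T₀]`.
-/

noncomputable section

variable {E : Type*} [NormedAddCommGroup E] [NormedSpace ℝ E]

/-- The convolution `k * f` of the paper. -/
def volterraConv (k : ℝ → ℝ) (f : ℝ → E) (t : ℝ) : E :=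
  ∫ s in 0..t, k (t - s) • f s

theorem IntervalIntegrable.comp_sub_left_of_mem {k : ℝ → ℝ} {T t : ℝ}
    (hk : IntervalIntegrable k volume 0 T) (ht : t ∈ Icc 0 T) :
    IntervalIntegrable (fun s => k (t - s)) volume 0 t := by
  have hk' := hk.mono_set (uIcc_subset_uIcc left_mem_uIcc (Icc_subset_uIcc ht))
  simpa using (hk'.comp_sub_left t).symm

theorem intervalIntegrable_volterraConv_integrand {k : ℝ → ℝ} {f : ℝ → E} {T t : ℝ}
    (hk : IntervalIntegrable k volume 0 T) (hf : ContinuousOn f (Icc 0 T)) (ht : t ∈ Icc 0 T) :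
    IntervalIntegrable (fun s => k (t - s) • f s) volume 0 t :=
  (hk.comp_sub_left_of_mem ht).smul_continuousOn
    (hf.mono (by rw [uIcc_of_le ht.1]; exact Icc_subset_Icc_right ht.2))

theorem volterraConv_eq_intervalIntegral_of_eqOn_zero {k : ℝ → ℝ} {f : ℝ → E} {a t : ℝ}
    (hint : IntervalIntegrable (fun s => k (t - s) • f s) volume 0 t) (ha : a ∈ Icc 0 t)
    (hf : EqOn f 0 (Icc 0 a)) :
    volterraConv k f t = ∫ s in a..t, k (t - s) • f s := by
  have hint' {b c : ℝ} (hb : b ∈ uIcc 0 t) (hc : c ∈ uIcc 0 t) :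
      IntervalIntegrable (fun s => k (t - s) • f s) volume b c :=
    hint.mono_set (uIcc_subset_uIcc hb hc)
  have hzero : ∫ s in 0..a, k (t - s) • f s = 0 := by
    rw [intervalIntegral.integral_congr (g := fun _ => (0 : E)), intervalIntegral.integral_zero]
    intro s hs
    rw [uIcc_of_le ha.1] at hs
    simp [hf hs]
  rw [volterraConv, ← intervalIntegral.integral_add_adjacent_intervals
    (hint' left_mem_uIcc (Icc_subset_uIcc ha)) (hint' (Icc_subset_uIcc ha) right_mem_uIcc),
    hzero, zero_add]

theorem norm_volterraConv_sub_le {k : ℝ → ℝ} {f g : ℝ → E} {u : ℝ → ℝ} {L t : ℝ} (ht : 0 ≤ t)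
    (hf : IntervalIntegrable (fun s => k (t - s) • f s) volume 0 t)
    (hg : IntervalIntegrable (fun s => k (t - s) • g s) volume 0 t)
    (hu : IntervalIntegrable (fun s => (L * |k (t - s)|) • u s) volume 0 t)
    (hfg : ∀ s ∈ Icc 0 t, ‖f s - g s‖ ≤ L * u s) :
    ‖volterraConv k f t - volterraConv k g t‖ ≤ volterraConv (fun x => L * |k x|) u t := by
  rw [volterraConv, volterraConv, ← intervalIntegral.integral_sub hf hg]
  refine (intervalIntegral.norm_integral_le_integral_norm ht).trans
    (intervalIntegral.integral_mono_on ht (hf.sub hg).norm hu fun s hs => ?_)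
  simp only [← smul_sub, norm_smul, Real.norm_eq_abs, smul_eq_mul]
  rw [mul_comm L, mul_assoc]
  exact mul_le_mul_of_nonneg_left (hfg s hs) (abs_nonneg _)

theorem exists_pos_forall_intervalIntegral_le {k : ℝ → ℝ} {T ε : ℝ}
    (hk : IntervalIntegrable k volume 0 T) (hε : 0 < ε) :
    ∃ h > 0, ∀ x ∈ Icc 0 T, x ≤ h → ∫ s in 0..x, k s ≤ ε := by
  have hF := intervalIntegral.continuousOn_primitive_interval' hk left_mem_uIcc 0 left_mem_uIcc
  obtain ⟨δ, hδ, hF⟩ := Metric.continuousWithinAt_iff.1 hF ε hε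
  refine ⟨δ / 2, half_pos hδ, fun x hx hxh => ?_⟩
  have hdist := hF (Icc_subset_uIcc hx) (by
    rw [Real.dist_eq, sub_zero, abs_of_nonneg hx.1]; linarith)
  rw [intervalIntegral.integral_same, Real.dist_eq, sub_zero] at hdist
  exact (le_abs_self _).trans hdist.le

theorem intervalIntegrable_of_integrableOn_sq {k : ℝ → ℝ} {T T₀ : ℝ}
    (hk2 : IntegrableOn (fun t => k t ^ 2) (Ioc 0 T))
    (hk : AEStronglyMeasurable k (volume.restrict (Ioc 0 T))) (hT₀ : T₀ ∈ Icc 0 T) :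
    IntervalIntegrable k volume 0 T₀ := by
  have hk1 : IntegrableOn k (Ioc 0 T) :=
    ((memLp_two_iff_integrable_sq hk).2 hk2).integrable one_le_two
  exact (intervalIntegrable_iff_integrableOn_Ioc_of_le hT₀.1).2
    (hk1.mono_set (Ioc_subset_Ioc_right hT₀.2))

section Gronwall

variable {k u : ℝ → ℝ} {T : ℝ}

theorem eqOn_zero_of_le_volterraConv_of_eqOn_zero (hk : IntervalIntegrable k volume 0 T)
    (hk0 : 0 ≤ k) (hu : ContinuousOn u (Icc 0 T)) (hu0 : 0 ≤ u)
    (hle : ∀ t ∈ Icc 0 T, u t ≤ volterraConv k u t) {a h : ℝ}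
    (hsmall : ∀ x ∈ Icc 0 T, x ≤ h → ∫ s in 0..x, k s ≤ 1 / 2)
    (ha : 0 ≤ a) (hzero : EqOn u 0 (Icc 0 T ∩ Iic a)) :
    EqOn u 0 (Icc 0 T ∩ Iic (a + h)) := by
  set S := Icc 0 (min (a + h) T)
  have hS : S ⊆ Icc 0 T := Icc_subset_Icc_right (min_le_right _ _)
  rintro s ⟨hs, hsah : s ≤ a + h⟩
  have hsS : s ∈ S := ⟨hs.1, le_min hsah hs.2⟩
  obtain ⟨t₀, ht₀, hmax⟩ := isCompact_Icc.exists_isMaxOn ⟨s, hsS⟩ (hu.mono hS)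
  have hhalf : ∀ t ∈ S, u t ≤ u t₀ / 2 := by
    intro t ht
    have htT := hS ht
    rcases le_or_gt t a with hta | hat
    · rw [hzero ⟨htT, hta⟩]
      exact div_nonneg (hu0 t₀) zero_le_two
    have hint := intervalIntegrable_volterraConv_integrand hk hu htT
    have hkt : IntervalIntegrable (fun s => k (t - s)) volume a t :=
      (hk.comp_sub_left_of_mem htT).mono_set (uIcc_subset_uIcc (Icc_subset_uIcc ⟨ha, hat.le⟩)
        right_mem_uIcc)
    calc u t ≤ volterraConv k u t := hle t htT
      _ = ∫ s in a..t, k (t - s) * u s :=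
          volterraConv_eq_intervalIntegral_of_eqOn_zero hint ⟨ha, hat.le⟩
            fun s hs => hzero ⟨⟨hs.1, hs.2.trans (hat.le.trans htT.2)⟩, hs.2⟩
      _ ≤ ∫ s in a..t, k (t - s) * u t₀ :=
          intervalIntegral.integral_mono_on hat.le
            (hint.mono_set (uIcc_subset_uIcc (Icc_subset_uIcc ⟨ha, hat.le⟩) right_mem_uIcc))
            (hkt.mul_const _) fun s hs =>
              mul_le_mul_of_nonneg_left (hmax ⟨ha.trans hs.1, hs.2.trans ht.2⟩) (hk0 _)
      _ = (∫ x in 0..t - a, k x) * u t₀ := by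
          rw [intervalIntegral.integral_mul_const, intervalIntegral.integral_comp_sub_left,
            sub_self]
      _ ≤ 1 / 2 * u t₀ :=
          mul_le_mul_of_nonneg_right (hsmall (t - a) ⟨by linarith, by linarith [htT.2]⟩
            (by linarith [ht.2, min_le_left (a + h) T])) (hu0 t₀)
      _ = u t₀ / 2 := by ring
  have ht₀0 : u t₀ = 0 := le_antisymm (by linarith [hhalf t₀ ht₀]) (hu0 t₀)
  exact le_antisymm (ht₀0 ▸ hmax hsS : u s ≤ 0) (hu0 s)

theorem eqOn_zero_of_le_volterraConv (hk : IntervalIntegrable k volume 0 T) (hk0 : 0 ≤ k)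
    (hu : ContinuousOn u (Icc 0 T)) (hu0 : 0 ≤ u)
    (hle : ∀ t ∈ Icc 0 T, u t ≤ volterraConv k u t) :
    EqOn u 0 (Icc 0 T) := by
  obtain ⟨h, hh, hsmall⟩ := exists_pos_forall_intervalIntegral_le hk one_half_pos
  have hstep (n : ℕ) : EqOn u 0 (Icc 0 T ∩ Iic (n * h)) := by
    induction n with
    | zero =>
      rintro s ⟨hs, hs0 : s ≤ _⟩
      obtain rfl : s = 0 := le_antisymm (by simpa using hs0) hs.1
      exact le_antisymm (by simpa [volterraConv] using hle 0 hs) (hu0 0)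
    | succ n ih =>
      push_cast [add_mul, one_mul]
      exact eqOn_zero_of_le_volterraConv_of_eqOn_zero hk hk0 hu hu0 hle hsmall (by positivity) ih
  intro t ht
  obtain ⟨n, hn⟩ := exists_nat_ge (t / h)
  exact hstep n ⟨ht, (div_le_iff₀ hh).1 hn⟩

end Gronwall

end

theorem riccati_volterra_uniqueness_general
    (T : ℝ) (K : ℝ → ℝ)
    (hKL2 : IntegrableOn (fun t => (K t) ^ 2) (Ioc 0 T))
    (hKcont : ContinuousOn K (Ioc 0 T))
    (Q : ℂ → ℂ) (C : ℝ) (hC : 0 ≤ C)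
    (hQ : ∀ z₁ z₂ : ℂ, ‖Q z₁ - Q z₂‖ ≤ C * (1 + ‖z₁‖ + ‖z₂‖) * ‖z₁ - z₂‖)
    (v : ℂ) (T₀ : ℝ) (hT₀ : T₀ ∈ Icc (0:ℝ) T)
    (ψ₁ ψ₂ : ℝ → ℂ)
    (hψ₁cont : ContinuousOn ψ₁ (Icc 0 T₀)) (hψ₂cont : ContinuousOn ψ₂ (Icc 0 T₀))
    (hInt₁ : ∀ t ∈ Icc (0:ℝ) T₀,
      IntervalIntegrable (fun s => (K (t - s) : ℂ) * Q (ψ₁ s)) volume 0 t)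
    (hInt₂ : ∀ t ∈ Icc (0:ℝ) T₀,
      IntervalIntegrable (fun s => (K (t - s) : ℂ) * Q (ψ₂ s)) volume 0 t)
    (heq₁ : ∀ t ∈ Icc (0:ℝ) T₀,
      ψ₁ t = v * (K t : ℂ) + ∫ s in (0:ℝ)..t, (K (t - s) : ℂ) * Q (ψ₁ s))
    (heq₂ : ∀ t ∈ Icc (0:ℝ) T₀,
      ψ₂ t = v * (K t : ℂ) + ∫ s in (0:ℝ)..t, (K (t - s) : ℂ) * Q (ψ₂ s)) :
    ∀ t ∈ Icc (0:ℝ) T₀, ψ₁ t = ψ₂ t := by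
  have hK : IntervalIntegrable K volume 0 T₀ :=
    intervalIntegrable_of_integrableOn_sq hKL2 (hKcont.aestronglyMeasurable measurableSet_Ioc) hT₀
  obtain ⟨hT₀0, -⟩ := hT₀
  obtain ⟨M₁, hM₁⟩ := isCompact_Icc.exists_bound_of_continuousOn hψ₁cont
  obtain ⟨M₂, hM₂⟩ := isCompact_Icc.exists_bound_of_continuousOn hψ₂cont
  set L := C * (1 + M₁ + M₂)
  have hL : 0 ≤ L := mul_nonneg hC (by
    linarith [(norm_nonneg _).trans (hM₁ 0 ⟨le_rfl, hT₀0⟩),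
      (norm_nonneg _).trans (hM₂ 0 ⟨le_rfl, hT₀0⟩)])
  have hQψ : ∀ s ∈ Icc 0 T₀, ‖Q (ψ₁ s) - Q (ψ₂ s)‖ ≤ L * ‖ψ₁ s - ψ₂ s‖ := fun s hs =>
    (hQ _ _).trans (mul_le_mul_of_nonneg_right
      (mul_le_mul_of_nonneg_left (by linarith [hM₁ s hs, hM₂ s hs]) hC) (norm_nonneg _))
  set u := fun s => ‖ψ₁ s - ψ₂ s‖
  have hu : ContinuousOn u (Icc 0 T₀) := (hψ₁cont.sub hψ₂cont).norm
  have hk : IntervalIntegrable (fun x => L * |K x|) volume 0 T₀ := hK.abs.const_mul L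
  have hle : ∀ t ∈ Icc 0 T₀, u t ≤ volterraConv (fun x => L * |K x|) u t := by
    intro t ht
    have hdiff : ψ₁ t - ψ₂ t = volterraConv K (Q ∘ ψ₁) t - volterraConv K (Q ∘ ψ₂) t := by
      simp only [volterraConv, Function.comp, Complex.real_smul]
      rw [heq₁ t ht, heq₂ t ht, add_sub_add_left_eq_sub]
    simp only [u, hdiff]
    exact norm_volterraConv_sub_le ht.1 (by simpa [Complex.real_smul] using hInt₁ t ht)
      (by simpa [Complex.real_smul] using hInt₂ t ht)
      (intervalIntegrable_volterraConv_integrand hk hu ht)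
      fun s hs => hQψ s ⟨hs.1, hs.2.trans ht.2⟩
  intro t ht
  simpa [u, sub_eq_zero] using
    eqOn_zero_of_le_volterraConv hk (fun x => mul_nonneg hL (abs_nonneg _)) hu
      (fun s => norm_nonneg _) hle ht

/-- Uniqueness for the Riccati–Volterra equation `ψ = vK + K*(Q∘ψ)` with an `L²`
kernel `K` continuous on `(0,T]` and a locally Lipschitz `Q` with quadratic growth:
any two continuous solutions on a common interval `[0,T₀] ⊆ [0,T]` coincide. -/
theorem riccati_volterra_uniqueness
    (T : ℝ) (hT : 0 < T) (K : ℝ → ℝ)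
    (hKL2 : IntegrableOn (fun t => (K t) ^ 2) (Ioc 0 T))
    (hKcont : ContinuousOn K (Ioc 0 T))
    (Q : ℂ → ℂ) (C : ℝ) (hC : 0 ≤ C)
    (hQ : ∀ z₁ z₂ : ℂ, ‖Q z₁ - Q z₂‖ ≤ C * (1 + ‖z₁‖ + ‖z₂‖) * ‖z₁ - z₂‖)
    (v : ℂ) (T₀ : ℝ) (hT₀ : T₀ ∈ Icc (0:ℝ) T)
    (ψ₁ ψ₂ : ℝ → ℂ)
    (hψ₁cont : ContinuousOn ψ₁ (Icc 0 T₀)) (hψ₂cont : ContinuousOn ψ₂ (Icc 0 T₀))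
    (hInt₁ : ∀ t ∈ Icc (0:ℝ) T₀,
      IntervalIntegrable (fun s => (K (t - s) : ℂ) * Q (ψ₁ s)) volume 0 t)
    (hInt₂ : ∀ t ∈ Icc (0:ℝ) T₀,
      IntervalIntegrable (fun s => (K (t - s) : ℂ) * Q (ψ₂ s)) volume 0 t)
    (heq₁ : ∀ t ∈ Icc (0:ℝ) T₀,
      ψ₁ t = v * (K t : ℂ) + ∫ s in (0:ℝ)..t, (K (t - s) : ℂ) * Q (ψ₁ s))
    (heq₂ : ∀ t ∈ Icc (0:ℝ) T₀,
      ψ₂ t = v * (K t : ℂ) + ∫ s in (0:ℝ)..t, (K (t - s) : ℂ) * Q (ψ₂ s)) :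
    ∀ t ∈ Icc (0:ℝ) T₀, ψ₁ t = ψ₂ t :=
  riccati_volterra_uniqueness_general T K hKL2 hKcont Q C hC hQ v T₀ hT₀ ψ₁ ψ₂ hψ₁cont hψ₂cont hInt₁
    hInt₂ heq₁ heq₂
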